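/- arXiv:1704.07125 — 3 statements merged into one kernel-verified Lean document; each statement's English description precedes it below -/
import Mathlib

section
/- Let E ⊂ (−π, π) be a compact set satisfying the interval condition at a ∈ E with parameter ρ > 0, let 0 < ρ_0 ≤ ρ/2 be such that [a−2ρ_0, a+2ρ_0] ⊂ (−π, π), and let k be a positive integer. Then there exist β ∈ (0, 1) and C > 0 such that for all sufficiently large n and every trigonometric polynomial T_n of degree at most n there exists a trigonometric polynomial V_n of degree at most n + √n with the following properties: (i) ‖V_n‖_E ≤ ‖T_n‖_E; (ii) |V_n(t) − T_n(t)| ≤ C β^{√n} ‖T_n‖_E for all t ∈ [a−ρ_0, a]; (iii) |V_n(t)| ≤ C β^{√n} ‖T_n‖_E for all t ∈ E \ [a−2ρ_0, a]; (iv) V_n^{(j)}(a) = T_n^{(j)}(a) for j = 0, 1, …, k. -/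
open scoped Real

/-- A real trigonometric polynomial of degree at most `n`. -/
def IsTrigPoly (n : ℕ) (T : ℝ → ℝ) : Prop :=
  ∃ A B : ℕ → ℝ,
    T = fun t => ∑ j ∈ Finset.range (n + 1),
      (A j * Real.cos (j * t) + B j * Real.sin (j * t))

/-- Sup-norm of a function over a set. -/
noncomputable def supNormR (f : ℝ → ℝ) (X : Set ℝ) : ℝ := ⨆ x ∈ X, |f x|

/-- `E` satisfies the interval condition at `a` with parameter `ρ`:
`[a-2ρ, a] ⊆ E` and `(a, a+2ρ) ∩ E = ∅`. -/
def IntervalCondition (E : Set ℝ) (a ρ : ℝ) : Prop :=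
  Set.Icc (a - 2 * ρ) a ⊆ E ∧ Set.Ioo a (a + 2 * ρ) ∩ E = ∅

/-!
Multiply `T` by `1 - G`, where `G t` is the probability that a binomial variable with parameters
`N` and `d t = sin² ((t - a) / 2)` is at least `s`. Since `d` is a trigonometric polynomial of
degree one, `(1 - G) T` has degree at most `n + N`; since `G` is divisible by `d ^ s` and
`d a = 0`, the derivatives of `(1 - G) T` and `T` at `a` agree up to order `s - 1`.

Take `N = Q M` and `s = P M` with `sin² (ρ₀ / 2) < P / Q < sin² ρ₀`. Chernoff's bound gives a
`κ < 1` with `G ≤ κ ^ M` where `d ≤ sin² (ρ₀ / 2)`, i.e. on `[a - ρ₀, a]`, and `1 - G ≤ κ ^ M`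
where `d ≥ sin² ρ₀`, which by the interval condition includes `E \ [a - 2ρ₀, a]`.
Finally `M = ⌊√n / Q⌋` gives `N ≤ √n` and `κ ^ M ≤ κ⁻¹ (κ ^ (1 / Q)) ^ √n`.
-/

open Real Finset Filter Topology
open scoped ContDiff

namespace IsTrigPoly

variable {n m : ℕ} {f g : ℝ → ℝ}

theorem of_harmonic {j : ℕ} (hj : j ≤ n) (A B : ℝ) :
    IsTrigPoly n (fun t => A * cos (j * t) + B * sin (j * t)) := by
  refine ⟨fun i => if i = j then A else 0, fun i => if i = j then B else 0, ?_⟩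
  funext t
  rw [sum_eq_single_of_mem j (mem_range.2 (Nat.lt_succ_of_le hj)) fun i _ hi => by simp [hi]]
  simp

theorem of_int_harmonic {j : ℤ} (hj : j.natAbs ≤ n) (A B : ℝ) :
    IsTrigPoly n (fun t => A * cos (j * t) + B * sin (j * t)) := by
  obtain ⟨i, rfl | rfl⟩ := Int.eq_nat_or_neg j
  · simpa using of_harmonic (n := n) (by simpa using hj) A B
  · convert of_harmonic (n := n) (by simpa using hj) A (-B) using 2 with t
    simp

theorem const (n : ℕ) (c : ℝ) : IsTrigPoly n (fun _ => c) := by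
  simpa using of_harmonic (Nat.zero_le n) c 0

theorem add (hf : IsTrigPoly n f) (hg : IsTrigPoly n g) :
    IsTrigPoly n (fun t => f t + g t) := by
  obtain ⟨A, B, rfl⟩ := hf
  obtain ⟨A', B', rfl⟩ := hg
  refine ⟨A + A', B + B', funext fun t => ?_⟩
  simp only [← sum_add_distrib, Pi.add_apply]
  exact sum_congr rfl fun j _ => by ring

theorem const_mul (c : ℝ) (hf : IsTrigPoly n f) : IsTrigPoly n (fun t => c * f t) := by
  obtain ⟨A, B, rfl⟩ := hf
  refine ⟨c • A, c • B, funext fun t => ?_⟩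
  simp only [mul_sum, Pi.smul_apply, smul_eq_mul]
  exact sum_congr rfl fun j _ => by ring

theorem sub (hf : IsTrigPoly n f) (hg : IsTrigPoly n g) :
    IsTrigPoly n (fun t => f t - g t) := by
  simpa only [sub_eq_add_neg, neg_one_mul] using hf.add (hg.const_mul (-1))

theorem sum {ι : Type*} (s : Finset ι) {F : ι → ℝ → ℝ} (hF : ∀ i ∈ s, IsTrigPoly n (F i)) :
    IsTrigPoly n (fun t => ∑ i ∈ s, F i t) := by
  classical
  induction s using Finset.induction_on with
  | empty => simpa using const n 0
  | insert i s hi ih =>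
    simp only [sum_insert hi]
    exact (hF i (mem_insert_self i s)).add (ih fun j hj => hF j (mem_insert_of_mem hj))

theorem mono (hnm : n ≤ m) (hf : IsTrigPoly n f) : IsTrigPoly m f := by
  obtain ⟨A, B, rfl⟩ := hf
  exact sum _ fun j hj => of_harmonic (by have := mem_range.1 hj; omega) (A j) (B j)

theorem cos_mul (hf : IsTrigPoly n f) : IsTrigPoly (n + 1) (fun t => cos t * f t) := by
  obtain ⟨A, B, rfl⟩ := hf
  simp only [mul_sum]
  refine sum _ fun j hj => ?_
  have hj := mem_range.1 hj
  convert (of_harmonic (n := n + 1) (j := j + 1) (by omega) (A j / 2) (B j / 2)).add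
    (of_int_harmonic (j := (j : ℤ) - 1) (by omega) (A j / 2) (B j / 2)) using 2 with t
  push_cast
  rw [add_mul, sub_mul, one_mul, cos_add, sin_add, cos_sub, sin_sub]
  ring

theorem sin_mul (hf : IsTrigPoly n f) : IsTrigPoly (n + 1) (fun t => sin t * f t) := by
  obtain ⟨A, B, rfl⟩ := hf
  simp only [mul_sum]
  refine sum _ fun j hj => ?_
  have hj := mem_range.1 hj
  convert (of_harmonic (n := n + 1) (j := j + 1) (by omega) (-B j / 2) (A j / 2)).add
    (of_int_harmonic (j := (j : ℤ) - 1) (by omega) (B j / 2) (-A j / 2)) using 2 with t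
  push_cast
  rw [add_mul, sub_mul, one_mul, cos_add, sin_add, cos_sub, sin_sub]
  ring

theorem mul_of_degree_one (hg : IsTrigPoly 1 g) (hf : IsTrigPoly n f) :
    IsTrigPoly (n + 1) (fun t => g t * f t) := by
  obtain ⟨A, B, rfl⟩ := hg
  convert ((hf.mono n.le_succ).const_mul (A 0)).add
    ((hf.cos_mul.const_mul (A 1)).add (hf.sin_mul.const_mul (B 1))) using 2 with t
  simp only [sum_range_succ, range_one, sum_singleton, Nat.cast_zero, Nat.cast_one, zero_mul,
    one_mul, cos_zero, sin_zero, mul_one, mul_zero, add_zero]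
  ring

theorem pow_mul (hg : IsTrigPoly 1 g) (hf : IsTrigPoly n f) (i : ℕ) :
    IsTrigPoly (n + i) (fun t => g t ^ i * f t) := by
  induction i with
  | zero => simpa using hf
  | succ i ih => simpa only [pow_succ', mul_assoc, ← add_assoc] using hg.mul_of_degree_one ih

theorem contDiff (hf : IsTrigPoly n f) {k : WithTop ℕ∞} : ContDiff ℝ k f := by
  obtain ⟨A, B, rfl⟩ := hf
  fun_prop

end IsTrigPoly

theorem isTrigPoly_one_sin_sq_half_sub (a : ℝ) :
    IsTrigPoly 1 (fun t => sin ((t - a) / 2) ^ 2) := by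
  convert (IsTrigPoly.const 1 (1 / 2)).add
    (IsTrigPoly.of_harmonic (j := 1) le_rfl (-cos a / 2) (-sin a / 2)) using 2 with t
  rw [sin_sq_eq_half_sub, show 2 * ((t - a) / 2) = t - a by ring, cos_sub]
  simp only [Nat.cast_one, one_mul]
  ring

-- The summands are written in the order of `add_pow`.
noncomputable def binomialUpperTail (N s : ℕ) (x : ℝ) : ℝ :=
  ∑ j ∈ Icc s N, x ^ j * (1 - x) ^ (N - j) * N.choose j

section BinomialTail

variable {N s : ℕ} {x y : ℝ}

theorem sum_choose_mul_pow_mul_pow_le {J : Finset ℕ} (hJ : J ⊆ range (N + 1))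
    (hx0 : 0 ≤ x) (hx1 : x ≤ 1) (hy : 0 ≤ y) (hyJ : ∀ j ∈ J, y ^ s ≤ y ^ j) :
    (∑ j ∈ J, x ^ j * (1 - x) ^ (N - j) * N.choose j) * y ^ s ≤ (1 - x + x * y) ^ N := by
  have hx1' : 0 ≤ 1 - x := by linarith
  calc (∑ j ∈ J, x ^ j * (1 - x) ^ (N - j) * N.choose j) * y ^ s
      ≤ ∑ j ∈ J, (x * y) ^ j * (1 - x) ^ (N - j) * N.choose j := by
        rw [sum_mul]
        refine sum_le_sum fun j hj => ?_
        calc x ^ j * (1 - x) ^ (N - j) * N.choose j * y ^ s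
            ≤ x ^ j * (1 - x) ^ (N - j) * N.choose j * y ^ j :=
              mul_le_mul_of_nonneg_left (hyJ j hj) (by positivity)
          _ = (x * y) ^ j * (1 - x) ^ (N - j) * N.choose j := by ring
    _ ≤ ∑ j ∈ range (N + 1), (x * y) ^ j * (1 - x) ^ (N - j) * N.choose j :=
        sum_le_sum_of_subset_of_nonneg hJ fun _ _ _ => by positivity
    _ = (1 - x + x * y) ^ N := by rw [← add_pow]; ring

theorem binomialUpperTail_nonneg (hx0 : 0 ≤ x) (hx1 : x ≤ 1) :
    0 ≤ binomialUpperTail N s x := by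
  have : 0 ≤ 1 - x := by linarith
  exact sum_nonneg fun j _ => by positivity

theorem binomialUpperTail_mul_pow_le (hx0 : 0 ≤ x) (hx1 : x ≤ 1) (hy : 1 ≤ y) :
    binomialUpperTail N s x * y ^ s ≤ (1 - x + x * y) ^ N :=
  sum_choose_mul_pow_mul_pow_le (fun j hj => by simp only [mem_Icc, mem_range] at hj ⊢; omega)
    hx0 hx1 (by linarith) fun j hj => pow_le_pow_right₀ hy (mem_Icc.1 hj).1

theorem binomialUpperTail_le_one (hx0 : 0 ≤ x) (hx1 : x ≤ 1) : binomialUpperTail N s x ≤ 1 := by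
  simpa using binomialUpperTail_mul_pow_le (N := N) (s := s) hx0 hx1 le_rfl

theorem one_sub_binomialUpperTail (hsN : s ≤ N + 1) :
    1 - binomialUpperTail N s x = ∑ j ∈ range s, x ^ j * (1 - x) ^ (N - j) * N.choose j := by
  have h := add_pow x (1 - x) N
  rw [add_sub_cancel, one_pow, ← sum_range_add_sum_Ico _ hsN, Ico_add_one_right_eq_Icc] at h
  rw [binomialUpperTail, sub_eq_iff_eq_add]
  exact h

theorem one_sub_binomialUpperTail_mul_pow_le (hx0 : 0 ≤ x) (hx1 : x ≤ 1) (hy0 : 0 ≤ y)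
    (hy1 : y ≤ 1) (hsN : s ≤ N + 1) :
    (1 - binomialUpperTail N s x) * y ^ s ≤ (1 - x + x * y) ^ N := by
  rw [one_sub_binomialUpperTail hsN]
  exact sum_choose_mul_pow_mul_pow_le (range_subset_range.2 hsN) hx0 hx1 hy0
    fun j hj => pow_le_pow_of_le_one hy0 hy1 (mem_range.1 hj).le

theorem binomialUpperTail_eq_pow_mul (x : ℝ) :
    binomialUpperTail N s x =
      x ^ s * ∑ j ∈ Icc s N, x ^ (j - s) * (1 - x) ^ (N - j) * N.choose j := by
  rw [binomialUpperTail, mul_sum]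
  refine sum_congr rfl fun j hj => ?_
  rw [← Nat.add_sub_cancel' (mem_Icc.1 hj).1, pow_add, Nat.add_sub_cancel_left]
  ring

end BinomialTail

theorem IsTrigPoly.binomialUpperTail_comp_mul {n N s : ℕ} {g T : ℝ → ℝ} (hg : IsTrigPoly 1 g)
    (hT : IsTrigPoly n T) : IsTrigPoly (n + N) (fun t => binomialUpperTail N s (g t) * T t) := by
  have hg' : IsTrigPoly 1 (fun t => 1 - g t) := (IsTrigPoly.const 1 1).sub hg
  simp only [binomialUpperTail, sum_mul]
  refine IsTrigPoly.sum _ fun j hj => ?_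
  have hjN := (mem_Icc.1 hj).2
  convert (((hg.pow_mul (hg'.pow_mul hT (N - j)) j).const_mul (N.choose j : ℝ))).mono
    (by omega : n + (N - j) + j ≤ n + N) using 2 with t
  ring

section Threshold

variable {P Q M : ℕ} {D x : ℝ}

theorem binomialUpperTail_le_pow {z : ℝ} (hx0 : 0 ≤ x) (hx1 : x ≤ 1) (hxD : x ≤ D)
    (hz : 1 ≤ z) : binomialUpperTail (Q * M) (P * M) x ≤ ((1 - D + D * z) ^ Q / z ^ P) ^ M := by
  rw [div_pow, ← pow_mul, ← pow_mul, le_div_iff₀ (by positivity)]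
  calc _ ≤ (1 - x + x * z) ^ (Q * M) := binomialUpperTail_mul_pow_le hx0 hx1 hz
    _ ≤ (1 - D + D * z) ^ (Q * M) := pow_le_pow_left₀ (by nlinarith) (by nlinarith) _

theorem one_sub_binomialUpperTail_le_pow {w : ℝ} (hPQ : P ≤ Q) (hx0 : 0 ≤ x) (hx1 : x ≤ 1)
    (hDx : D ≤ x) (hw0 : 0 < w) (hw1 : w ≤ 1) :
    1 - binomialUpperTail (Q * M) (P * M) x ≤ ((1 - D + D * w) ^ Q / w ^ P) ^ M := by
  rw [div_pow, ← pow_mul, ← pow_mul, le_div_iff₀ (by positivity)]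
  calc _ ≤ (1 - x + x * w) ^ (Q * M) := one_sub_binomialUpperTail_mul_pow_le hx0 hx1 hw0.le hw1
        ((Nat.mul_le_mul_right M hPQ).trans (Nat.le_succ _))
    _ ≤ (1 - D + D * w) ^ (Q * M) := pow_le_pow_left₀ (by nlinarith) (by nlinarith) _

end Threshold

theorem HasDerivAt.eventually_nhdsGT_lt {f : ℝ → ℝ} {f' a : ℝ} (hf : HasDerivAt f f' a)
    (h : 0 < f') : ∀ᶠ y in 𝓝[>] a, f a < f y := by
  filter_upwards [((hasDerivAt_iff_tendsto_slope.mp hf).mono_left (nhdsGT_le_nhdsNE a)).eventually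
    (lt_mem_nhds h), self_mem_nhdsWithin] with y hy hya
  exact (slope_pos_iff hya).mp hy

theorem HasDerivAt.eventually_nhdsLT_lt {f : ℝ → ℝ} {f' a : ℝ} (hf : HasDerivAt f f' a)
    (h : f' < 0) : ∀ᶠ y in 𝓝[<] a, f a < f y := by
  filter_upwards [((hasDerivAt_iff_tendsto_slope.mp hf).mono_left (nhdsLT_le_nhdsNE a)).eventually
    (gt_mem_nhds h), self_mem_nhdsWithin] with y hy hya
  rwa [slope_comm, slope_neg_iff_of_le (le_of_lt hya)] at hy

theorem hasDerivAt_pow_sub_affine_pow (D : ℝ) (P Q : ℕ) :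
    HasDerivAt (fun z : ℝ => z ^ P - (1 - D + D * z) ^ Q) (P - Q * D) 1 := by
  simpa using (hasDerivAt_pow P (1 : ℝ)).fun_sub
    ((((hasDerivAt_id (1 : ℝ)).const_mul D).const_add (1 - D)).fun_pow Q)

section ChernoffBase

variable {D : ℝ} {P Q : ℕ}

theorem exists_one_lt_affine_pow_lt_pow (h : D * Q < P) :
    ∃ z, 1 < z ∧ (1 - D + D * z) ^ Q < z ^ P := by
  obtain ⟨z, hz, hz1⟩ := (((hasDerivAt_pow_sub_affine_pow D P Q).eventually_nhdsGT_lt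
    (by linarith)).and self_mem_nhdsWithin).exists
  exact ⟨z, hz1, by simpa using hz⟩

theorem exists_pos_lt_one_affine_pow_lt_pow (h : P < D * Q) :
    ∃ w, 0 < w ∧ w < 1 ∧ (1 - D + D * w) ^ Q < w ^ P := by
  obtain ⟨w, hw, hw0, hw1⟩ := (((hasDerivAt_pow_sub_affine_pow D P Q).eventually_nhdsLT_lt
    (by linarith)).and (Ioo_mem_nhdsLT zero_lt_one)).exists
  exact ⟨w, hw0, hw1, by simpa using hw⟩

end ChernoffBase

theorem exists_nat_mul_lt_lt_mul {a b : ℝ} (ha : 0 ≤ a) (hab : a < b) :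
    ∃ P Q : ℕ, 0 < P ∧ a * Q < P ∧ (P : ℝ) < b * Q := by
  obtain ⟨Q, hQ⟩ := exists_nat_gt (b - a)⁻¹
  refine ⟨⌊a * Q⌋₊ + 1, Q, Nat.succ_pos _, by push_cast; exact Nat.lt_floor_add_one _, ?_⟩
  have h₁ := Nat.floor_le (mul_nonneg ha Q.cast_nonneg)
  have h₂ : 1 < (b - a) * Q := by rwa [inv_lt_iff_one_lt_mul₀' (sub_pos.2 hab)] at hQ
  push_cast
  nlinarith

theorem exists_binomialUpperTail_threshold {D₁ D₂ : ℝ} (hD₁ : 0 ≤ D₁) (hD : D₁ < D₂)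
    (hD₂ : D₂ ≤ 1) :
    ∃ P Q : ℕ, 0 < P ∧ P ≤ Q ∧ ∃ κ ∈ Set.Ioo (0 : ℝ) 1, ∀ M : ℕ, ∀ x ∈ Set.Icc (0 : ℝ) 1,
      (x ≤ D₁ → binomialUpperTail (Q * M) (P * M) x ≤ κ ^ M) ∧
      (D₂ ≤ x → 1 - binomialUpperTail (Q * M) (P * M) x ≤ κ ^ M) := by
  obtain ⟨P, Q, hP, h₁, h₂⟩ := exists_nat_mul_lt_lt_mul hD₁ hD
  have hPQ : P ≤ Q := by
    exact_mod_cast h₂.le.trans (mul_le_of_le_one_left Q.cast_nonneg hD₂)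
  obtain ⟨z, hz, hzκ⟩ := exists_one_lt_affine_pow_lt_pow h₁
  obtain ⟨w, hw0, hw1, hwκ⟩ := exists_pos_lt_one_affine_pow_lt_pow h₂
  have hκ₁ : 0 < (1 - D₁ + D₁ * z) ^ Q / z ^ P := by
    have : 0 < 1 - D₁ + D₁ * z := by nlinarith
    positivity
  have hκ₂ : 0 ≤ (1 - D₂ + D₂ * w) ^ Q / w ^ P := by
    have : 0 ≤ 1 - D₂ + D₂ * w := by nlinarith
    positivity
  refine ⟨P, Q, hP, hPQ, _, ⟨lt_max_of_lt_left hκ₁, max_lt ((div_lt_one (by positivity)).2 hzκ)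
    ((div_lt_one (by positivity)).2 hwκ)⟩, fun M x hx => ⟨fun hxD => ?_, fun hxD => ?_⟩⟩
  · exact (binomialUpperTail_le_pow hx.1 hx.2 hxD hz.le).trans
      (pow_le_pow_left₀ hκ₁.le (le_max_left _ _) M)
  · exact (one_sub_binomialUpperTail_le_pow hPQ hx.1 hx.2 hxD hw0 hw1.le).trans
      (pow_le_pow_left₀ hκ₂ (le_max_right _ _) M)

theorem sin_sq_eq_sin_abs_sq (y : ℝ) : sin y ^ 2 = sin |y| ^ 2 := by
  rcases abs_choice y with h | h <;> simp [h]

theorem sin_sq_le_sin_sq_of_abs_le {x y : ℝ} (hxy : |y| ≤ x) (hx : x ≤ π / 2) :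
    sin y ^ 2 ≤ sin x ^ 2 := by
  rw [sin_sq_eq_sin_abs_sq]
  exact pow_le_pow_left₀ (sin_nonneg_of_nonneg_of_le_pi (abs_nonneg y) (by linarith [pi_pos]))
    (sin_le_sin_of_le_of_le_pi_div_two (by linarith [abs_nonneg y, pi_pos]) hx hxy) 2

theorem sin_sq_le_sin_sq_of_le_abs {x y : ℝ} (hx : 0 ≤ x) (hxy : x ≤ |y|) (hy : |y| ≤ π - x) :
    sin x ^ 2 ≤ sin y ^ 2 := by
  rw [sin_sq_eq_sin_abs_sq y]
  refine pow_le_pow_left₀ (sin_nonneg_of_nonneg_of_le_pi hx (by linarith)) ?_ 2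
  rcases le_total |y| (π / 2) with h | h
  · exact sin_le_sin_of_le_of_le_pi_div_two (by linarith [pi_pos]) h hxy
  · rw [← sin_pi_sub |y|]
    exact sin_le_sin_of_le_of_le_pi_div_two (by linarith [pi_pos]) (by linarith) (by linarith)

theorem sin_sq_half_lt_sin_sq {x : ℝ} (hx0 : 0 < x) (hx : x ≤ π / 2) :
    sin (x / 2) ^ 2 < sin x ^ 2 :=
  pow_lt_pow_left₀ (sin_lt_sin_of_lt_of_le_pi_div_two (by linarith) hx (by linarith))
    (sin_nonneg_of_nonneg_of_le_pi (by linarith) (by linarith)) two_ne_zero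

theorem sin_sq_half_sub_le_of_mem_Icc {a ρ t : ℝ} (hρ : ρ ≤ π) (ht : t ∈ Set.Icc (a - ρ) a) :
    sin ((t - a) / 2) ^ 2 ≤ sin (ρ / 2) ^ 2 :=
  sin_sq_le_sin_sq_of_abs_le (abs_le.2 ⟨by linarith [ht.1], by linarith [ht.1, ht.2]⟩) (by linarith)

theorem IntervalCondition.sin_sq_le_sin_sq_half_sub {E : Set ℝ} {a ρ ρ₀ t : ℝ}
    (hic : IntervalCondition E a ρ) (hEsub : E ⊆ Set.Ioo (-π) π) (hρ₀pos : 0 ≤ ρ₀)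
    (hρ₀ : ρ₀ ≤ ρ / 2) (hleft : -π < a - 2 * ρ₀) (hright : a + 2 * ρ₀ < π)
    (ht : t ∈ E \ Set.Icc (a - 2 * ρ₀) a) : sin ρ₀ ^ 2 ≤ sin ((t - a) / 2) ^ 2 := by
  obtain ⟨htE, htI⟩ := ht
  obtain ⟨htπ, htπ'⟩ := hEsub htE
  have hfar : t < a - 2 * ρ₀ ∨ a + 2 * ρ ≤ t := by
    by_contra! h
    rcases le_or_gt t a with hta | hta
    · exact htI ⟨h.1, hta⟩
    · exact (Set.eq_empty_iff_forall_notMem.1 hic.2) t ⟨⟨hta, h.2⟩, htE⟩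
  refine sin_sq_le_sin_sq_of_le_abs hρ₀pos ?_ ?_
  · rw [le_abs]
    rcases hfar with h | h
    · right; linarith
    · left; linarith
  · rw [abs_le]
    constructor <;> linarith

theorem supNormR_nonneg (f : ℝ → ℝ) (X : Set ℝ) : 0 ≤ supNormR f X :=
  Real.iSup_nonneg fun _ => Real.iSup_nonneg fun _ => abs_nonneg _

theorem abs_le_supNormR {f : ℝ → ℝ} {X : Set ℝ} (hf : ContinuousOn f X) (hX : IsCompact X)
    {x : ℝ} (hx : x ∈ X) : |f x| ≤ supNormR f X := by
  obtain ⟨c, hc⟩ := (hX.image_of_continuousOn hf.abs).bddAbove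
  refine le_ciSup_of_le ⟨max c 0, ?_⟩ x (ciSup_pos (f := fun _ => |f x|) hx).ge
  rintro _ ⟨y, rfl⟩
  exact Real.iSup_le (fun hy => (hc ⟨y, hy, rfl⟩).trans (le_max_left _ _)) (le_max_right _ _)

theorem supNormR_le {f : ℝ → ℝ} {X : Set ℝ} {c : ℝ} (h : ∀ x ∈ X, |f x| ≤ c) (hc : 0 ≤ c) :
    supNormR f X ≤ c :=
  Real.iSup_le (fun x => Real.iSup_le (h x) hc) hc

theorem iteratedDeriv_pow_mul_eq_zero {𝕜 : Type*} [NontriviallyNormedField 𝕜] {f : 𝕜 → 𝕜}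
    {a : 𝕜} (hf : ContDiff 𝕜 ∞ f) (hfa : f a = 0) {i r : ℕ} (hir : i < r) {h : 𝕜 → 𝕜}
    (hh : ContDiff 𝕜 ∞ h) : iteratedDeriv i (fun t => f t ^ r * h t) a = 0 := by
  induction i generalizing r h with
  | zero => simp [hfa, zero_pow (Nat.pos_iff_ne_zero.1 hir)]
  | succ i ih =>
    obtain ⟨r, rfl⟩ : ∃ r', r = r' + 1 := ⟨r - 1, by omega⟩
    have hderiv : deriv (fun t => f t ^ (r + 1) * h t) =
        fun t => f t ^ r * ((r + 1) * deriv f t * h t + f t * deriv h t) := by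
      funext t
      rw [(((hf.differentiable (by simp) t).hasDerivAt.fun_pow (r + 1)).fun_mul
        (hh.differentiable (by simp) t).hasDerivAt).deriv]
      push_cast
      ring
    rw [iteratedDeriv_succ', hderiv]
    refine ih (by omega) ?_
    have hf' := (contDiff_infty_iff_deriv.mp hf).2
    have hh' := (contDiff_infty_iff_deriv.mp hh).2
    fun_prop

noncomputable def localizer (a : ℝ) (N s : ℕ) (t : ℝ) : ℝ :=
  1 - binomialUpperTail N s (sin ((t - a) / 2) ^ 2)

section Localizer

variable {a : ℝ} {N s : ℕ} {T : ℝ → ℝ}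

theorem IsTrigPoly.localizer_mul {n : ℕ} (hT : IsTrigPoly n T) :
    IsTrigPoly (n + N) (fun t => localizer a N s t * T t) := by
  convert (hT.mono (Nat.le_add_right n N)).sub
    ((isTrigPoly_one_sin_sq_half_sub a).binomialUpperTail_comp_mul (s := s) hT) using 2 with t
  rw [localizer]
  ring

theorem localizer_mem_Icc (t : ℝ) : localizer a N s t ∈ Set.Icc 0 1 := by
  have h0 := sq_nonneg (sin ((t - a) / 2))
  have h1 := sin_sq_le_one ((t - a) / 2)
  exact ⟨sub_nonneg.2 (binomialUpperTail_le_one h0 h1),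
    sub_le_self _ (binomialUpperTail_nonneg h0 h1)⟩

theorem iteratedDeriv_localizer_mul (hT : ContDiff ℝ ∞ T) {j : ℕ} (hj : j < s) :
    iteratedDeriv j (fun t => localizer a N s t * T t) a = iteratedDeriv j T a := by
  set d : ℝ → ℝ := fun t => sin ((t - a) / 2) ^ 2
  set H : ℝ → ℝ := fun t =>
    ∑ i ∈ Icc s N, d t ^ (i - s) * (1 - d t) ^ (N - i) * N.choose i
  have hsplit : (fun t => localizer a N s t * T t) = T - fun t => d t ^ s * (H t * T t) := by
    funext t
    simp only [localizer, binomialUpperTail_eq_pow_mul, Pi.sub_apply, d, H]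
    ring
  have hd : ContDiff ℝ ∞ d := by fun_prop
  have hHT : ContDiff ℝ ∞ fun t => H t * T t := by fun_prop
  have hjle : ((j : ℕ∞) : WithTop ℕ∞) ≤ ∞ := WithTop.coe_le_coe.2 le_top
  rw [hsplit,
    iteratedDeriv_sub (hT.contDiffAt.of_le hjle) (((hd.pow s).mul hHT).contDiffAt.of_le hjle),
    iteratedDeriv_pow_mul_eq_zero hd (by simp [d]) hj hHT, sub_zero]

theorem abs_localizer_mul_le_of_le {ε c t : ℝ} (h : localizer a N s t ≤ ε) (hT : |T t| ≤ c) :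
    |localizer a N s t * T t| ≤ ε * c := by
  rw [abs_mul, abs_of_nonneg (localizer_mem_Icc t).1]
  exact mul_le_mul h hT (abs_nonneg _) ((localizer_mem_Icc t).1.trans h)

theorem abs_localizer_mul_le {c t : ℝ} (hT : |T t| ≤ c) : |localizer a N s t * T t| ≤ c :=
  (abs_localizer_mul_le_of_le (localizer_mem_Icc t).2 hT).trans_eq (one_mul c)

theorem abs_localizer_mul_sub_le {ε c t : ℝ}
    (h : binomialUpperTail N s (sin ((t - a) / 2) ^ 2) ≤ ε) (hT : |T t| ≤ c) :
    |localizer a N s t * T t - T t| ≤ ε * c := by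
  have h0 := binomialUpperTail_nonneg (N := N) (s := s) (sq_nonneg (sin ((t - a) / 2)))
    (sin_sq_le_one _)
  rw [localizer, show ∀ u v : ℝ, (1 - u) * v - v = -(u * v) by intros; ring, abs_neg, abs_mul,
    abs_of_nonneg h0]
  exact mul_le_mul h hT (abs_nonneg _) (h0.trans h)

end Localizer

theorem pow_floor_div_le_inv_mul_rpow {κ : ℝ} (hκ0 : 0 < κ) (hκ1 : κ ≤ 1) (y : ℝ) (Q : ℕ) :
    κ ^ ⌊y / Q⌋₊ ≤ κ⁻¹ * (κ ^ ((Q : ℝ)⁻¹)) ^ y := by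
  rw [← Real.rpow_mul hκ0.le, ← Real.rpow_neg_one, ← Real.rpow_add hκ0, ← Real.rpow_natCast]
  refine Real.rpow_le_rpow_of_exponent_ge hκ0 hκ1 ?_
  linarith [Nat.lt_floor_add_one (y / Q), div_eq_inv_mul y Q]

theorem stmt_7_general (E : Set ℝ) (a ρ ρ₀ : ℝ) (k : ℕ)
    (hEcomp : IsCompact E) (hEsub : E ⊆ Set.Ioo (-π) π)
    (hic : IntervalCondition E a ρ)
    (hρ₀pos : 0 < ρ₀) (hρ₀ : ρ₀ ≤ ρ / 2)
    (hnb : Set.Icc (a - 2 * ρ₀) (a + 2 * ρ₀) ⊆ Set.Ioo (-π) π) :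
    ∃ β ∈ Set.Ioo (0 : ℝ) 1, ∃ C > (0 : ℝ), ∃ n₀ : ℕ, ∀ n : ℕ, n₀ ≤ n →
      ∀ T : ℝ → ℝ, IsTrigPoly n T →
        ∃ m : ℕ, (m : ℝ) ≤ (n : ℝ) + Real.sqrt n ∧ ∃ V : ℝ → ℝ, IsTrigPoly m V ∧
          supNormR V E ≤ supNormR T E ∧
          (∀ t ∈ Set.Icc (a - ρ₀) a,
            |V t - T t| ≤ C * β ^ (Real.sqrt n) * supNormR T E) ∧
          (∀ t ∈ E \ Set.Icc (a - 2 * ρ₀) a,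
            |V t| ≤ C * β ^ (Real.sqrt n) * supNormR T E) ∧
          (∀ j ≤ k, iteratedDeriv j V a = iteratedDeriv j T a) := by
  have hleft := (hnb ⟨le_rfl, by linarith⟩).1
  have hright := (hnb ⟨by linarith, le_rfl⟩).2
  obtain ⟨P, Q, hP, hPQ, κ, ⟨hκ0, hκ1⟩, hκ⟩ := exists_binomialUpperTail_threshold (sq_nonneg _)
    (sin_sq_half_lt_sin_sq hρ₀pos (by linarith)) (sin_sq_le_one ρ₀)
  have hQ : (0 : ℝ) < Q := by exact_mod_cast hP.trans_le hPQ
  refine ⟨κ ^ (Q : ℝ)⁻¹, ⟨by positivity, Real.rpow_lt_one hκ0.le hκ1 (by positivity)⟩, κ⁻¹,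
    by positivity, (Q * (k + 1)) ^ 2, fun n hn T hT => ?_⟩
  set M := ⌊√n / Q⌋₊
  have hQM : (Q * M : ℝ) ≤ √n := (le_div_iff₀' hQ).1 (Nat.floor_le (by positivity))
  have hkM : k + 1 ≤ M :=
    Nat.le_floor <| (le_div_iff₀' hQ).2 <| Real.le_sqrt_of_sq_le (by exact_mod_cast hn)
  have hκM : κ ^ M * supNormR T E ≤ κ⁻¹ * (κ ^ (Q : ℝ)⁻¹) ^ √n * supNormR T E :=
    mul_le_mul_of_nonneg_right (pow_floor_div_le_inv_mul_rpow hκ0 hκ1.le _ _)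
      (supNormR_nonneg T E)
  have hTE : ∀ t ∈ E, |T t| ≤ supNormR T E := fun t =>
    abs_le_supNormR (hT.contDiff (k := 0)).continuous.continuousOn hEcomp
  refine ⟨n + Q * M, by push_cast; linarith, fun t => localizer a (Q * M) (P * M) t * T t,
    hT.localizer_mul, supNormR_le (fun t ht => abs_localizer_mul_le (hTE t ht))
    (supNormR_nonneg T E), fun t ht => le_trans ?_ hκM, fun t ht => le_trans ?_ hκM,
    fun j hj => iteratedDeriv_localizer_mul hT.contDiff (by nlinarith)⟩
  · exact abs_localizer_mul_sub_le ((hκ M _ ⟨sq_nonneg _, sin_sq_le_one _⟩).1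
      (sin_sq_half_sub_le_of_mem_Icc (by linarith) ht)) (hTE t (hic.1 ⟨by linarith [ht.1], ht.2⟩))
  · exact abs_localizer_mul_le_of_le ((hκ M _ ⟨sq_nonneg _, sin_sq_le_one _⟩).2
      (hic.sin_sq_le_sin_sq_half_sub hEsub hρ₀pos.le hρ₀ hleft hright ht)) (hTE t ht.1)

/-- localization of a trigonometric polynomial near `a` by multiplication
with a fast decreasing polynomial, keeping derivatives at `a` up to order `k`. -/
theorem stmt_7 (E : Set ℝ) (a ρ ρ₀ : ℝ) (k : ℕ) (hk : 0 < k)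
    (hEcomp : IsCompact E) (hEsub : E ⊆ Set.Ioo (-π) π)
    (haE : a ∈ E) (hρ : 0 < ρ) (hic : IntervalCondition E a ρ)
    (hρ₀pos : 0 < ρ₀) (hρ₀ : ρ₀ ≤ ρ / 2)
    (hnb : Set.Icc (a - 2 * ρ₀) (a + 2 * ρ₀) ⊆ Set.Ioo (-π) π) :
    ∃ β ∈ Set.Ioo (0 : ℝ) 1, ∃ C > (0 : ℝ), ∃ n₀ : ℕ, ∀ n : ℕ, n₀ ≤ n →
      ∀ T : ℝ → ℝ, IsTrigPoly n T →
        ∃ m : ℕ, (m : ℝ) ≤ (n : ℝ) + Real.sqrt n ∧ ∃ V : ℝ → ℝ, IsTrigPoly m V ∧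
          supNormR V E ≤ supNormR T E ∧
          (∀ t ∈ Set.Icc (a - ρ₀) a,
            |V t - T t| ≤ C * β ^ (Real.sqrt n) * supNormR T E) ∧
          (∀ t ∈ E \ Set.Icc (a - 2 * ρ₀) a,
            |V t| ≤ C * β ^ (Real.sqrt n) * supNormR T E) ∧
          (∀ j ≤ k, iteratedDeriv j V a = iteratedDeriv j T a) :=
  stmt_7_general E a ρ ρ₀ k hEcomp hEsub hic hρ₀pos hρ₀ hnb
end

section
/- Let U be a real trigonometric polynomial and let J, J' ⊂ ℝ be closed nondegenerate intervals such that U is strictly monotone on each of J and J' and maps each of them onto [−1, 1]. Define φ : J → J' by φ(t) = (U|_{J'})^{−1}(U(t)). Then for every positive integer l there exists C = C(U, l) > 0 such that for all t in the interior of J, |φ^{(l)}(t)| ≤ C · |U'(φ(t))|^{−(2l−1)}. -/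
open scoped Real

/-!
Where `U'(φ t) ≠ 0`, `φ` agrees near `t` with `g ∘ U` for a local inverse `g` of `U` at `φ t`,
so `φ' = U' / U' ∘ φ`. Hence differentiating `N(t, φ t) / U'(φ t)^k` for smooth `N` gives
`N₁(t, φ t) / U'(φ t)^(k+2)` for another smooth `N₁`, and by induction
`φ^{(m+1)}(t) = N_m(t, φ t) / U'(φ t)^(2m+1)`. The smooth `N_m` is bounded on the compact
rectangle `J × J'`. Continuity of `φ` holds because `U` restricted to the compact interval `J'`
is a closed embedding.
-/

open scoped ContDiff Topology

theorem IsTrigPoly.contDiff_s10 {n : ℕ} {T : ℝ → ℝ} (hT : IsTrigPoly n T) :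
    ContDiff ℝ ∞ T := by
  obtain ⟨A, B, rfl⟩ := hT
  refine ContDiff.sum fun j _ => ?_
  exact (contDiff_const.mul (Real.contDiff_cos.comp (contDiff_const.mul contDiff_id))).add
    (contDiff_const.mul (Real.contDiff_sin.comp (contDiff_const.mul contDiff_id)))

theorem ContinuousOn.of_comp_injOn {X Y Z : Type*} [TopologicalSpace X] [TopologicalSpace Y]
    [TopologicalSpace Z] [T2Space Z] {U : Y → Z} {K : Set Y} (hK : IsCompact K)
    (hU : ContinuousOn U K) (hinj : Set.InjOn U K) {φ : X → Y} {s : Set X}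
    (hφ : Set.MapsTo φ s K) (hUφ : ContinuousOn (U ∘ φ) s) : ContinuousOn φ s := by
  have : CompactSpace K := isCompact_iff_compactSpace.mp hK
  have hemb : Topology.IsClosedEmbedding (K.domRestrict U) :=
    (continuousOn_iff_continuous_domRestrict.mp hU).isClosedEmbedding hinj.injective
  have hres : Continuous (hφ.restrict φ s K) :=
    hemb.continuous_iff.mpr (continuousOn_iff_continuous_domRestrict.mp hUφ)
  exact continuousOn_iff_continuous_domRestrict.mpr (continuous_subtype_val.comp hres)

theorem HasDerivAt.of_comp_eq_eventually {𝕜 : Type*} [NontriviallyNormedField 𝕜]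
    [CompleteSpace 𝕜] {U φ : 𝕜 → 𝕜} {t a b : 𝕜} (hφ : ContinuousAt φ t)
    (hUφ : HasStrictDerivAt U b (φ t)) (hb : b ≠ 0) (hU : HasDerivAt U a t)
    (hev : ∀ᶠ s in 𝓝 t, U (φ s) = U s) : HasDerivAt φ (a / b) t := by
  set g := hUφ.localInverse U b (φ t) hb
  have hleft : ∀ᶠ y in 𝓝 (φ t), g (U y) = y :=
    (hUφ.hasStrictFDerivAt_equiv hb).eventually_left_inverse
  have hφ_eq : φ =ᶠ[𝓝 t] g ∘ U := by
    filter_upwards [hφ.eventually hleft, hev] with s hgs hUs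
    rw [Function.comp_apply, ← hUs, hgs]
  have hg : HasDerivAt g b⁻¹ (U t) := hev.self_of_nhds ▸ (hUφ.to_localInverse hb).hasDerivAt
  rw [div_eq_inv_mul]
  exact hφ_eq.hasDerivAt_iff.mpr (hg.comp t hU)

/-- `branchNumerator U m (t, φ t)` is the numerator of `φ^{(m+1)}(t)` over `U'(φ t)^(2m+1)`. -/
noncomputable def branchNumerator (U : ℝ → ℝ) : ℕ → ℝ × ℝ → ℝ
  | 0 => fun p => deriv U p.1
  | m + 1 => fun p =>
      fderiv ℝ (branchNumerator U m) p (1, 0) * deriv U p.2 ^ 2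
      + fderiv ℝ (branchNumerator U m) p (0, 1) * (deriv U p.1 * deriv U p.2)
      - (2 * m + 1 : ℝ) * (branchNumerator U m p * (deriv^[2] U p.2 * deriv U p.1))

section Branch

variable {U : ℝ → ℝ}

theorem contDiff_branchNumerator (hU : ContDiff ℝ ∞ U) (m : ℕ) :
    ContDiff ℝ ∞ (branchNumerator U m) := by
  have hU' : ContDiff ℝ ∞ (deriv U) := hU.iterate_deriv 1
  have hU'' : ContDiff ℝ ∞ (deriv^[2] U) := hU.iterate_deriv 2
  induction m with
  | zero => exact hU'.comp contDiff_fst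
  | succ m ih =>
    have hfd : ContDiff ℝ ∞ (fderiv ℝ (branchNumerator U m)) := ih.fderiv_right le_rfl
    exact (((hfd.clm_apply contDiff_const).mul ((hU'.comp contDiff_snd).pow 2)).add
      ((hfd.clm_apply contDiff_const).mul
        ((hU'.comp contDiff_fst).mul (hU'.comp contDiff_snd)))).sub
      (contDiff_const.mul (ih.mul ((hU''.comp contDiff_snd).mul (hU'.comp contDiff_fst))))

theorem hasDerivAt_branchNumerator_div (hU : ContDiff ℝ ∞ U) {φ : ℝ → ℝ} {t : ℝ} (m : ℕ)
    (hφ : HasDerivAt φ (deriv U t / deriv U (φ t)) t) (hD : deriv U (φ t) ≠ 0) :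
    HasDerivAt (fun s => branchNumerator U m (s, φ s) / deriv U (φ s) ^ (2 * m + 1))
      (branchNumerator U (m + 1) (t, φ t) / deriv U (φ t) ^ (2 * (m + 1) + 1)) t := by
  set L := fderiv ℝ (branchNumerator U m) (t, φ t)
  have hN : HasDerivAt (fun s => branchNumerator U m (s, φ s))
      (L (1, deriv U t / deriv U (φ t))) t :=
    ((contDiff_branchNumerator hU m).differentiable (by simp) _).hasFDerivAt.comp_hasDerivAt
      t ((hasDerivAt_id t).prodMk hφ)
  have hU'φ : HasDerivAt (fun s => deriv U (φ s))
      (deriv^[2] U (φ t) * (deriv U t / deriv U (φ t))) t :=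
    (((hU.iterate_deriv 1).differentiable (by simp)) _).hasDerivAt.comp t hφ
  have hL : L (1, deriv U t / deriv U (φ t))
      = L (1, 0) + deriv U t / deriv U (φ t) * L (0, 1) := by
    rw [← smul_eq_mul, ← map_smul, ← map_add]
    simp
  refine (hN.div (hU'φ.fun_pow (2 * m + 1)) (pow_ne_zero _ hD)).congr_deriv ?_
  rw [hL]
  simp only [branchNumerator]
  push_cast
  field_simp
  ring

theorem iteratedDeriv_succ_eq_branchNumerator_div (hU : ContDiff ℝ ∞ U) {φ : ℝ → ℝ}
    {s : Set ℝ} (hs : IsOpen s) (hφ : ContinuousOn φ s) (hUφ : Set.EqOn (U ∘ φ) U s)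
    (m : ℕ) {t : ℝ} (ht : t ∈ s) (hD : deriv U (φ t) ≠ 0) :
    iteratedDeriv (m + 1) φ t = branchNumerator U m (t, φ t) / deriv U (φ t) ^ (2 * m + 1) := by
  have hφ' {t : ℝ} (ht : t ∈ s) (hD : deriv U (φ t) ≠ 0) :
      HasDerivAt φ (deriv U t / deriv U (φ t)) t :=
    .of_comp_eq_eventually (hφ.continuousAt (hs.mem_nhds ht))
      (hU.contDiffAt.hasStrictDerivAt (by simp)) hD
      (hU.differentiable (by simp) t).hasDerivAt
      (Filter.eventually_of_mem (hs.mem_nhds ht) hUφ)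
  induction m generalizing t with
  | zero => simp [(hφ' ht hD).deriv, branchNumerator]
  | succ m ih =>
    have hnear : ∀ᶠ r in 𝓝 t, r ∈ s ∧ deriv U (φ r) ≠ 0 :=
      (hs.eventually_mem ht).and (((hU.iterate_deriv 1).continuous.continuousAt.comp
        (hφ.continuousAt (hs.mem_nhds ht))).eventually_ne hD)
    have heq : iteratedDeriv (m + 1) φ =ᶠ[𝓝 t]
        fun r => branchNumerator U m (r, φ r) / deriv U (φ r) ^ (2 * m + 1) :=
      hnear.mono fun r hr => ih hr.1 hr.2
    rw [iteratedDeriv_succ, heq.deriv_eq]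
    exact (hasDerivAt_branchNumerator_div hU m (hφ' ht hD) hD).deriv

end Branch

theorem stmt_10_general (U : ℝ → ℝ) (hU : ∃ N : ℕ, IsTrigPoly N U)
    (c d c' d' : ℝ)
    (hmonoJ' : StrictMonoOn U (Set.Icc c' d') ∨ StrictAntiOn U (Set.Icc c' d'))
    (φ : ℝ → ℝ)
    (hφ : ∀ t ∈ Set.Icc c d, φ t ∈ Set.Icc c' d' ∧ U (φ t) = U t) :
    ∀ l : ℕ, 0 < l → ∃ C > (0 : ℝ), ∀ t ∈ Set.Ioo c d,
      |iteratedDeriv l φ t| * |deriv U (φ t)| ^ (2 * l - 1) ≤ C := by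
  intro l hl
  obtain ⟨m, rfl⟩ := Nat.exists_eq_add_one_of_ne_zero hl.ne'
  obtain ⟨n, hUn⟩ := hU
  have hUsm : ContDiff ℝ ∞ U := hUn.contDiff_s10
  have hφc : ContinuousOn φ (Set.Icc c d) :=
    .of_comp_injOn isCompact_Icc hUsm.continuous.continuousOn
      (hmonoJ'.elim StrictMonoOn.injOn StrictAntiOn.injOn) (fun t ht => (hφ t ht).1)
      (hUsm.continuous.continuousOn.congr fun t ht => (hφ t ht).2)
  obtain ⟨C, hC⟩ := (isCompact_Icc.prod isCompact_Icc).exists_bound_of_continuousOn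
    (s := Set.Icc c d ×ˢ Set.Icc c' d') (contDiff_branchNumerator hUsm m).continuous.continuousOn
  refine ⟨max C 1, by positivity, fun t ht => ?_⟩
  have htJ : t ∈ Set.Icc c d := Set.Ioo_subset_Icc_self ht
  rcases eq_or_ne (deriv U (φ t)) 0 with hD | hD
  · rw [hD, abs_zero, zero_pow (by omega), mul_zero]
    positivity
  rw [iteratedDeriv_succ_eq_branchNumerator_div hUsm isOpen_Ioo (hφc.mono Set.Ioo_subset_Icc_self)
      (fun r hr => (hφ r (Set.Ioo_subset_Icc_self hr)).2) m ht hD,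
    show 2 * (m + 1) - 1 = 2 * m + 1 by omega, abs_div, abs_pow,
    div_mul_cancel₀ _ (pow_ne_zero _ (abs_ne_zero.mpr hD))]
  exact (hC (t, φ t) ⟨htJ, (hφ t htJ).1⟩).trans (le_max_left _ _)

/-- derivative bounds for the branch transition map
`φ = (U|_{J'})⁻¹ ∘ U : J → J'`:  `|φ^{(l)}(t)| ≤ C · |U'(φ(t))|^{-(2l-1)}`, stated in the
equivalent product form `|φ^{(l)}(t)| · |U'(φ(t))|^{2l-1} ≤ C`. -/
theorem stmt_10 (U : ℝ → ℝ) (hU : ∃ N : ℕ, IsTrigPoly N U)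
    (c d c' d' : ℝ) (hcd : c < d) (hcd' : c' < d')
    (hmonoJ : StrictMonoOn U (Set.Icc c d) ∨ StrictAntiOn U (Set.Icc c d))
    (hmonoJ' : StrictMonoOn U (Set.Icc c' d') ∨ StrictAntiOn U (Set.Icc c' d'))
    (hontoJ : U '' Set.Icc c d = Set.Icc (-1) 1)
    (hontoJ' : U '' Set.Icc c' d' = Set.Icc (-1) 1)
    (φ : ℝ → ℝ)
    (hφ : ∀ t ∈ Set.Icc c d, φ t ∈ Set.Icc c' d' ∧ U (φ t) = U t) :
    ∀ l : ℕ, 0 < l → ∃ C > (0 : ℝ), ∀ t ∈ Set.Ioo c d,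
      |iteratedDeriv l φ t| * |deriv U (φ t)| ^ (2 * l - 1) ≤ C :=
  stmt_10_general U hU c d c' d' hmonoJ' φ hφ
end

section
/- Let V be a complex polynomial of degree N ≥ 1, let z_0 ∈ ℂ satisfy |V(z_0)| = 1, and let k be a positive integer. Then there exists C = C(V, z_0, k) > 0 such that for all integers m ≥ k, | |(V^m)^{(k)}(z_0)| − m^k |V'(z_0)|^k | ≤ C m^{k−1}; in particular |(V^m)^{(k)}(z_0)| = m^k |V'(z_0)|^k + O(m^{k−1}) as m → ∞. -/
open Polynomial Finset

noncomputable def Bpoly (V : Polynomial ℂ) : ℕ → ℕ → Polynomial ℂ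
  | 0, 0 => 1
  | 0, _+1 => 0
  | k+1, 0 => Polynomial.derivative (Bpoly V k 0)
  | k+1, j+1 => Polynomial.derivative V * Bpoly V k j
      + Polynomial.derivative (Bpoly V k (j+1))

lemma Bpoly_eq_zero (V : Polynomial ℂ) : ∀ k j, k < j → Bpoly V k j = 0 := by
  intro k
  induction k with
  | zero => intro j hj; match j, hj with | j+1, _ => rfl
  | succ k ih =>
    intro j hj
    match j, hj with
    | j+1, hj =>
      show Polynomial.derivative V * Bpoly V k j + Polynomial.derivative (Bpoly V k (j+1)) = 0
      rw [ih j (by omega), ih (j+1) (by omega)]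
      simp

lemma Bpoly_diag (V : Polynomial ℂ) : ∀ k, Bpoly V k k = (Polynomial.derivative V) ^ k := by
  intro k
  induction k with
  | zero => rfl
  | succ k ih =>
    show Polynomial.derivative V * Bpoly V k k + Polynomial.derivative (Bpoly V k (k+1))
        = _
    rw [ih, Bpoly_eq_zero V k (k+1) (by omega)]
    simp [pow_succ]
    ring

lemma key (V : Polynomial ℂ) : ∀ k : ℕ, ∀ m : ℕ, k ≤ m →
    (Polynomial.derivative (R := ℂ))^[k] (V ^ m) =
      ∑ j ∈ Finset.range (k+1), (∏ i ∈ Finset.range j, ((m:ℂ) - i)) •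
        (V ^ (m - j) * Bpoly V k j) := by
  intro k
  induction k with
  | zero => intro m _; simp [Bpoly]
  | succ k ih =>
    intro m hm
    rw [Function.iterate_succ_apply', ih m (by omega), map_sum]
    have hstep : ∀ j ∈ Finset.range (k+1),
        Polynomial.derivative ((∏ i ∈ Finset.range j, ((m:ℂ) - i)) •
          (V ^ (m - j) * Bpoly V k j)) =
        (∏ i ∈ Finset.range (j+1), ((m:ℂ) - i)) •
          (V ^ (m - (j+1)) * (Polynomial.derivative V * Bpoly V k j)) +
        (∏ i ∈ Finset.range j, ((m:ℂ) - i)) •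
          (V ^ (m - j) * Polynomial.derivative (Bpoly V k j)) := by
      intro j hj
      simp only [Finset.mem_range] at hj
      have hjm : j + 1 ≤ m := by omega
      rw [map_smul, Polynomial.derivative_mul, Polynomial.derivative_pow]
      have hcast : ((m - j : ℕ) : ℂ) = (m : ℂ) - j := by
        push_cast [Nat.cast_sub (by omega : j ≤ m)]; ring
      have hsub : m - j - 1 = m - (j+1) := by omega
      rw [hcast, hsub, Finset.prod_range_succ]
      rw [smul_add]
      congr 1
      simp only [Polynomial.smul_eq_C_mul, map_mul]
      ring
    rw [Finset.sum_congr rfl hstep, Finset.sum_add_distrib]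
    have hB : ∑ j ∈ Finset.range (k+1), (∏ i ∈ Finset.range j, ((m:ℂ) - i)) •
          (V ^ (m - j) * Polynomial.derivative (Bpoly V k j))
        = (∑ j ∈ Finset.range (k+1), (∏ i ∈ Finset.range (j+1), ((m:ℂ) - i)) •
            (V ^ (m - (j+1)) * Polynomial.derivative (Bpoly V k (j+1))))
          + (∏ i ∈ Finset.range 0, ((m:ℂ) - i)) •
            (V ^ (m - 0) * Polynomial.derivative (Bpoly V k 0)) := by
      have e := Finset.sum_range_succ' (fun j => (∏ i ∈ Finset.range j, ((m:ℂ) - i)) •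
        (V ^ (m - j) * Polynomial.derivative (Bpoly V k j))) (k+1)
      rw [Finset.sum_range_succ, Bpoly_eq_zero V k (k+1) (by omega)] at e
      simpa using e
    rw [hB,
      Finset.sum_range_succ' (fun j => (∏ i ∈ Finset.range j, ((m:ℂ) - i)) •
        (V ^ (m - j) * Bpoly V (k+1) j)) (k+1)]
    have h0 : Bpoly V (k+1) 0 = Polynomial.derivative (Bpoly V k 0) := rfl
    have hs : ∀ j, Bpoly V (k+1) (j+1) = Polynomial.derivative V * Bpoly V k j
        + Polynomial.derivative (Bpoly V k (j+1)) := fun j => rfl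
    simp only [h0, hs, mul_add, smul_add, Finset.sum_add_distrib]
    abel

lemma prod_le (k m : ℕ) (h : k ≤ m) :
    ∏ i ∈ Finset.range k, ((m:ℝ) - i) ≤ (m:ℝ)^k := by
  calc ∏ i ∈ Finset.range k, ((m:ℝ) - i) ≤ ∏ i ∈ Finset.range k, (m:ℝ) := by
        apply Finset.prod_le_prod
        · intro i hi; simp only [Finset.mem_range] at hi
          have : (i:ℝ) ≤ (m:ℝ) := by exact_mod_cast by omega
          linarith
        · intro i _; linarith [Nat.cast_nonneg (α := ℝ) m]
    _ = (m:ℝ)^k := by rw [Finset.prod_const, Finset.card_range]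

lemma prod_nonneg' (k m : ℕ) (h : k ≤ m) :
    0 ≤ ∏ i ∈ Finset.range k, ((m:ℝ) - i) := by
  apply Finset.prod_nonneg
  intro i hi; simp only [Finset.mem_range] at hi
  have : (i:ℝ) ≤ (m:ℝ) := by exact_mod_cast by omega
  linarith

lemma prod_bound : ∀ k m : ℕ, k ≤ m →
    (m:ℝ)^k - ∏ i ∈ Finset.range k, ((m:ℝ) - i) ≤ (k:ℝ)^2 * (m:ℝ)^(k-1) := by
  intro k
  induction k with
  | zero => intro m _; simp
  | succ k ih =>
    intro m hm
    rcases Nat.eq_zero_or_pos k with hk0 | hk0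
    · subst hk0; simp
    have hmk : k ≤ m := by omega
    have h1 : (m:ℝ)^k - ∏ i ∈ Finset.range k, ((m:ℝ) - i) ≤ (k:ℝ)^2 * (m:ℝ)^(k-1) :=
      ih m hmk
    have hm1 : (1:ℝ) ≤ (m:ℝ) := by exact_mod_cast by omega
    have hmn : (0:ℝ) ≤ (m:ℝ) := by linarith
    have hpow : (m:ℝ)^(k-1) * (m:ℝ) = (m:ℝ)^k := by
      rw [← pow_succ]; congr 1; omega
    have hPle := prod_le k m hmk
    have hPnn := prod_nonneg' k m hmk
    have hkm : (k:ℝ) ≤ (m:ℝ) := by exact_mod_cast hmk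
    rw [Finset.prod_range_succ, pow_succ]
    push_cast
    nlinarith [sq_nonneg ((k:ℝ)), pow_nonneg hmn k, pow_nonneg hmn (k-1)]

lemma norm_prod_eq (j m : ℕ) (h : j ≤ m) :
    ‖∏ i ∈ Finset.range j, ((m:ℂ) - i)‖ = ∏ i ∈ Finset.range j, ((m:ℝ) - i) := by
  have : (∏ i ∈ Finset.range j, ((m:ℂ) - i)) =
      (((∏ i ∈ Finset.range j, ((m:ℝ) - i)) : ℝ) : ℂ) := by
    push_cast; rfl
  rw [this, Complex.norm_real, Real.norm_of_nonneg (prod_nonneg' j m h)]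

/-- asymptotics of the `k`-th derivative of powers of a polynomial at a
point where the polynomial has modulus `1`:
`|(V^m)^{(k)}(z₀)| = m^k |V'(z₀)|^k + O(m^{k-1})`. -/
theorem stmt_13 (V : Polynomial ℂ) (hV : 1 ≤ V.natDegree) (z₀ : ℂ)
    (hz : ‖V.eval z₀‖ = 1) (k : ℕ) (hk : 0 < k) :
    ∃ C > (0 : ℝ), ∀ m : ℕ, k ≤ m →
      |‖Polynomial.eval z₀ ((fun q => Polynomial.derivative q)^[k] (V ^ m))‖ -
          (m : ℝ) ^ k * ‖Polynomial.eval z₀ (Polynomial.derivative V)‖ ^ k| ≤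
        C * (m : ℝ) ^ (k - 1) := by
  set D : ℝ := ‖Polynomial.eval z₀ (Polynomial.derivative V)‖ with hD
  set A : ℝ := ∑ j ∈ Finset.range k, ‖(Bpoly V k j).eval z₀‖ with hA
  have hAnn : 0 ≤ A := Finset.sum_nonneg fun j _ => norm_nonneg _
  have hDnn0 : 0 ≤ (k:ℝ)^2 * D^k := by positivity
  refine ⟨A + (k:ℝ)^2 * D^k + 1, by linarith, ?_⟩
  intro m hm
  have hm1 : 1 ≤ m := le_trans hk hm
  have hm1' : (1:ℝ) ≤ (m:ℝ) := by exact_mod_cast hm1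
  have hmn : (0:ℝ) ≤ (m:ℝ) := by linarith
  -- evaluate the key identity
  have hkey := key V k m hm
  have hiter : (fun q => Polynomial.derivative q)^[k] (V ^ m) =
      (Polynomial.derivative (R := ℂ))^[k] (V ^ m) := rfl
  rw [hiter, hkey]
  rw [Polynomial.eval_finset_sum]
  simp only [Polynomial.eval_smul, Polynomial.eval_mul, Polynomial.eval_pow, smul_eq_mul]
  set S : ℂ := ∑ j ∈ Finset.range (k+1), (∏ i ∈ Finset.range j, ((m:ℂ) - i)) *
      ((V.eval z₀) ^ (m - j) * (Bpoly V k j).eval z₀) with hS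
  set M : ℂ := (∏ i ∈ Finset.range k, ((m:ℂ) - i)) *
      ((V.eval z₀) ^ (m - k) * (Bpoly V k k).eval z₀) with hM
  have hSM : S = (∑ j ∈ Finset.range k, (∏ i ∈ Finset.range j, ((m:ℂ) - i)) *
      ((V.eval z₀) ^ (m - j) * (Bpoly V k j).eval z₀)) + M := by
    rw [hS, Finset.sum_range_succ]
  set P : ℝ := ∏ i ∈ Finset.range k, ((m:ℝ) - i) with hP
  have hMnorm : ‖M‖ = P * D^k := by
    rw [hM, Bpoly_diag, Polynomial.eval_pow]
    rw [norm_mul, norm_mul, norm_pow, norm_pow, hz, one_pow, one_mul,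
      norm_prod_eq k m hm]
  -- bound the error sum
  have herr : ‖S - M‖ ≤ A * (m:ℝ)^(k-1) := by
    rw [hSM, add_sub_cancel_right]
    calc ‖∑ j ∈ Finset.range k, (∏ i ∈ Finset.range j, ((m:ℂ) - i)) *
        ((V.eval z₀) ^ (m - j) * (Bpoly V k j).eval z₀)‖
        ≤ ∑ j ∈ Finset.range k, ‖(∏ i ∈ Finset.range j, ((m:ℂ) - i)) *
          ((V.eval z₀) ^ (m - j) * (Bpoly V k j).eval z₀)‖ := norm_sum_le _ _
      _ ≤ ∑ j ∈ Finset.range k, ‖(Bpoly V k j).eval z₀‖ * (m:ℝ)^(k-1) := by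
          apply Finset.sum_le_sum
          intro j hj
          simp only [Finset.mem_range] at hj
          have hjm : j ≤ m := by omega
          rw [norm_mul, norm_mul, norm_pow, hz, one_pow, one_mul,
            norm_prod_eq j m hjm]
          have h1 : ∏ i ∈ Finset.range j, ((m:ℝ) - i) ≤ (m:ℝ)^(k-1) := by
            calc ∏ i ∈ Finset.range j, ((m:ℝ) - i) ≤ (m:ℝ)^j := prod_le j m hjm
              _ ≤ (m:ℝ)^(k-1) := pow_le_pow_right₀ hm1' (by omega)
          have h2 : 0 ≤ ∏ i ∈ Finset.range j, ((m:ℝ) - i) := prod_nonneg' j m hjm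
          have h3 : 0 ≤ ‖(Bpoly V k j).eval z₀‖ := norm_nonneg _
          nlinarith
      _ = A * (m:ℝ)^(k-1) := by rw [hA, Finset.sum_mul]
  have hPle := prod_le k m hm
  have hPnn := prod_nonneg' k m hm
  have hprodb := prod_bound k m hm
  have hDnn : 0 ≤ D := norm_nonneg _
  have hDk : 0 ≤ D^k := pow_nonneg hDnn k
  have t1 : |‖S‖ - ‖M‖| ≤ ‖S - M‖ := abs_norm_sub_norm_le S M
  have hpownn : (0:ℝ) ≤ (m:ℝ)^(k-1) := pow_nonneg hmn _
  have t2 : |‖M‖ - (m:ℝ)^k * D^k| ≤ (k:ℝ)^2 * D^k * (m:ℝ)^(k-1) := by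
    rw [hMnorm, abs_of_nonpos (by nlinarith)]
    nlinarith
  calc |‖S‖ - (m:ℝ)^k * D^k| ≤ |‖S‖ - ‖M‖| + |‖M‖ - (m:ℝ)^k * D^k| := by
        have := abs_add_le (‖S‖ - ‖M‖) (‖M‖ - (m:ℝ)^k * D^k)
        simpa using this
    _ ≤ A * (m:ℝ)^(k-1) + (k:ℝ)^2 * D^k * (m:ℝ)^(k-1) := by
        have := le_trans t1 herr
        linarith
    _ ≤ (A + (k:ℝ)^2 * D^k + 1) * (m:ℝ)^(k-1) := by nlinarith
end
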